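/- Let δ > 0 and let h_δ be the Huber function (h_δ(t) = t²/2 for |t| ≤ δ, and δ(|t| - δ/2) otherwise). Let a b : Fin n → ℝ both be monotone increasing. Then for every permutation σ of Fin n, ∑ i, h_δ(a(i) - b(i)) ≤ ∑ i, h_δ(a(σ(i)) - b(i)). -/

import Mathlib

/-!
The Huber function is convex: for `δ ≥ 0` it is the supremum of the affine functions
`t ↦ c * t - c ^ 2 / 2` over `|c| ≤ δ`, attained at `c = max (-δ) (min δ t)`, so it has a supporting
line at every point. For convex `f` and monotone `a`, `b` the cost matrix `f (a i - b j)` is a Monge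
matrix, and for a Monge cost the identity is an optimal assignment: if `m` is the largest point
moved by `σ`, then `swap m (σ m) * σ` fixes `m`, has smaller support, and by the Monge inequality
for the rows `σ m ≤ m` and columns `σ⁻¹ m ≤ m` costs no more than `σ`.
-/

noncomputable def huber (δ : ℝ) (t : ℝ) : ℝ :=
  if |t| ≤ δ then t ^ 2 / 2 else δ * (|t| - δ / 2)

open Finset Equiv Equiv.Perm

def IsMonge {ι M : Type*} [LE ι] [Add M] [LE M] (C : ι → ι → M) : Prop :=
  ∀ ⦃i i' j j'⦄, i ≤ i' → j ≤ j' → C i j + C i' j' ≤ C i j' + C i' j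

theorem convexOn_univ_of_forall_exists_subgradient {𝕜 E : Type*} [Field 𝕜] [LinearOrder 𝕜]
    [IsStrictOrderedRing 𝕜] [AddCommGroup E] [Module 𝕜 E] {f : E → 𝕜}
    (hf : ∀ z, ∃ φ : E →ₗ[𝕜] 𝕜, ∀ x, f z + φ (x - z) ≤ f x) : ConvexOn 𝕜 Set.univ f := by
  refine ⟨convex_univ, fun x _ y _ a b ha hb hab => ?_⟩
  obtain ⟨φ, hφ⟩ := hf (a • x + b • y)
  have hsum : a • (x - (a • x + b • y)) + b • (y - (a • x + b • y)) = 0 := by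
    rw [smul_sub, smul_sub, sub_add_sub_comm, ← add_smul, hab, one_smul, sub_self]
  have hφsum := congrArg φ hsum
  rw [map_add, map_smul, map_smul, map_zero, smul_eq_mul, smul_eq_mul] at hφsum
  simp only [smul_eq_mul]
  linear_combination mul_le_mul_of_nonneg_left (hφ x) ha + mul_le_mul_of_nonneg_left (hφ y) hb
    - hφsum - f (a • x + b • y) * hab

theorem ConvexOn.map_add_map_le_of_mem_Icc {𝕜 β : Type*} [Field 𝕜] [LinearOrder 𝕜]
    [IsStrictOrderedRing 𝕜] [AddCommMonoid β] [PartialOrder β] [IsOrderedAddMonoid β]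
    [Module 𝕜 β] {D : Set 𝕜} {f : 𝕜 → β} (hf : ConvexOn 𝕜 D f) {u v s : 𝕜} (hu : u ∈ D)
    (hv : v ∈ D) (hs : s ∈ Set.Icc u v) : f s + f (u + v - s) ≤ f u + f v := by
  obtain ⟨a, b, ha, hb, hab, rfl⟩ := Icc_subset_segment hs
  have hreflect : u + v - (a • u + b • v) = b • u + a • v := by
    simp only [smul_eq_mul]; linear_combination (u + v) * hab.symm
  calc f (a • u + b • v) + f (u + v - (a • u + b • v))
      ≤ (a • f u + b • f v) + (b • f u + a • f v) := by
        rw [hreflect]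
        exact add_le_add (hf.2 hu hv ha hb hab) (hf.2 hu hv hb ha (by rw [add_comm, hab]))
    _ = f u + f v := by
        rw [add_add_add_comm, ← add_smul, ← add_smul, add_comm b a, hab, one_smul, one_smul]

theorem ConvexOn.isMonge_comp_sub {𝕜 β ι : Type*} [Field 𝕜] [LinearOrder 𝕜]
    [IsStrictOrderedRing 𝕜] [AddCommMonoid β] [PartialOrder β] [IsOrderedAddMonoid β]
    [Module 𝕜 β] [Preorder ι] {f : 𝕜 → β} (hf : ConvexOn 𝕜 Set.univ f) {a b : ι → 𝕜}
    (ha : Monotone a) (hb : Monotone b) : IsMonge fun i j => f (a i - b j) := by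
  intro i i' j j' hi hj
  have h := hf.map_add_map_le_of_mem_Icc (Set.mem_univ (a i - b j')) (Set.mem_univ (a i' - b j))
    (s := a i - b j) ⟨by linarith [hb hj], by linarith [ha hi]⟩
  rwa [show a i - b j' + (a i' - b j) - (a i - b j) = a i' - b j' by ring] at h

section Monge

variable {ι M : Type*} [LinearOrder ι] [Fintype ι] [AddCommMonoid M]
  [PartialOrder M] [IsOrderedAddMonoid M] {C : ι → ι → M}

theorem IsMonge.sum_comp_swap_mul_le (hC : IsMonge C) {σ : Perm ι} {m : ι} (hσm : σ m ≤ m)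
    (hσ_symm : σ.symm m ≤ m) : ∑ i, C ((swap m (σ m) * σ) i) i ≤ ∑ i, C (σ i) i := by
  set k := σ.symm m
  obtain hkm | hkm := eq_or_ne k m
  · rw [← (σ.symm_apply_eq.1 hkm), swap_self, ← Perm.one_def, one_mul]
  have hk : k ∈ univ.erase m := mem_erase.2 ⟨hkm, mem_univ k⟩
  have hσk : σ k = m := σ.apply_symm_apply m
  simp only [← add_sum_erase univ _ (mem_univ m), ← add_sum_erase _ _ hk, ← add_assoc]
  refine add_le_add ?_ (sum_congr rfl fun i hi => ?_).le
  · simp only [Perm.mul_apply, swap_apply_right, hσk, swap_apply_left]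
    exact add_comm (C m m) _ ▸ hC hσm (show k ≤ m from hσ_symm)
  · obtain ⟨hik, him⟩ := by simpa using hi
    rw [Perm.mul_apply, swap_apply_of_ne_of_ne (by rintro h; exact hik (by simp [k, ← h]))
      (σ.injective.ne him)]

theorem IsMonge.sum_le_sum_comp_perm (hC : IsMonge C) (σ : Perm ι) :
    ∑ i, C i i ≤ ∑ i, C (σ i) i := by
  obtain h | h := σ.support.eq_empty_or_nonempty
  · rw [support_eq_empty_iff.1 h]; rfl
  set m := σ.support.max' h
  have hm : m ∈ σ.support := max'_mem _ h
  calc ∑ i, C i i ≤ ∑ i, C ((swap m (σ m) * σ) i) i := IsMonge.sum_le_sum_comp_perm hC _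
    _ ≤ ∑ i, C (σ i) i := hC.sum_comp_swap_mul_le (le_max' _ _ (apply_mem_support.2 hm))
        (le_max' _ _ (apply_mem_support.1 (by rwa [σ.apply_symm_apply])))
termination_by σ.support.card
decreasing_by exact card_support_swap_mul (mem_support.1 hm)

end Monge

theorem isGreatest_huber {δ : ℝ} (hδ : 0 ≤ δ) (t : ℝ) :
    IsGreatest ((fun c => c * t - c ^ 2 / 2) '' Set.Icc (-δ) δ) (huber δ t) := by
  constructor
  · refine ⟨max (-δ) (min δ t), ⟨le_max_left _ _, max_le (by linarith) (min_le_left _ _)⟩, ?_⟩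
    unfold huber
    split_ifs with ht
    · rw [abs_le] at ht
      rw [min_eq_right ht.2, max_eq_right ht.1]; ring
    · rcases le_total 0 t with h0 | h0
      · rw [abs_of_nonneg h0] at ht ⊢
        rw [min_eq_left (by linarith), max_eq_right (by linarith)]; ring
      · rw [abs_of_nonpos h0] at ht ⊢
        rw [min_eq_right (by linarith), max_eq_left (by linarith)]; ring
  · rintro _ ⟨c, hc, rfl⟩
    have hc' : |c| ≤ δ := abs_le.2 hc
    unfold huber
    split_ifs with ht
    · nlinarith [sq_nonneg (t - c)]
    · nlinarith [neg_abs_le c, le_abs_self c, neg_abs_le t, le_abs_self t, abs_mul_abs_self c]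

theorem convexOn_huber {δ : ℝ} (hδ : 0 ≤ δ) : ConvexOn ℝ Set.univ (huber δ) := by
  refine convexOn_univ_of_forall_exists_subgradient fun z => ?_
  obtain ⟨⟨c, hc, hcz⟩, -⟩ := isGreatest_huber hδ z
  refine ⟨c • LinearMap.id, fun x => ?_⟩
  have hcx := (isGreatest_huber hδ x).2 ⟨c, hc, rfl⟩
  simp only [LinearMap.smul_apply, LinearMap.id_apply, smul_eq_mul, ← hcz]
  linarith

theorem sorted_matching_huber (δ : ℝ) (hδ : 0 < δ) {n : ℕ}
    (a b : Fin n → ℝ) (ha : Monotone a) (hb : Monotone b)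
    (σ : Equiv.Perm (Fin n)) :
    ∑ i, huber δ (a i - b i) ≤ ∑ i, huber δ (a (σ i) - b i) :=
  ((convexOn_huber hδ.le).isMonge_comp_sub ha hb).sum_le_sum_comp_perm σ
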